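/- arXiv:2004.08146 — 3 statements merged into one kernel-verified Lean document; each statement's English description precedes it below -/
import Mathlib

section
/- Let $D \in \mathbb{C}^{n\times n}$, let $\Gamma_5 \in \mathbb{C}^{n\times n}$ be Hermitian with $\Gamma_5^2 = I$, and set $Q := \Gamma_5 D$. Let $P \in \mathbb{C}^{n\times m}$ and let $\Gamma_5^c \in \mathbb{C}^{m\times m}$ be Hermitian with $(\Gamma_5^c)^2 = I_m$ and $\Gamma_5 P = P\Gamma_5^c$. Define $D_c := P^H D P$ and $Q_c := \Gamma_5^c D_c$, and assume $D_c$ is invertible. Then $Q_c = P^H Q P$, $Q_c$ is invertible, and the coarse grid error propagators coincide: $I - P Q_c^{-1} P^H Q = I - P D_c^{-1} P^H D$. -/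
/-!
Taking adjoints in `Γ₅ P = P Γ₅ᶜ` shows that `Pᴴ Γ₅ = Γ₅ᶜ Pᴴ`, so `Γ₅ᶜ` can be pulled through the
Galerkin projection: `Q_c = Γ₅ᶜ D_c = Pᴴ Q P`. In the correction `P Q_c⁻¹ Pᴴ Q`, the factor
`Q_c⁻¹ = D_c⁻¹ (Γ₅ᶜ)⁻¹` meets `Pᴴ Γ₅ = Γ₅ᶜ Pᴴ`, and the two copies of `Γ₅ᶜ` cancel.
-/

open Matrix

namespace Matrix

variable {ι κ α : Type*} [Fintype ι] [Fintype κ]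

theorem conjTranspose_mul_eq_of_mul_eq [Semiring α] [StarRing α]
    {Γ : Matrix ι ι α} {Γc : Matrix κ κ α} {P : Matrix ι κ α}
    (hΓ : Γᴴ = Γ) (hΓc : Γcᴴ = Γc) (h : Γ * P = P * Γc) : Γc * Pᴴ = Pᴴ * Γ := by
  simpa only [conjTranspose_mul, hΓ, hΓc] using (congrArg conjTranspose h).symm

theorem mul_galerkin_of_mul_eq [Semiring α]
    {Γ A : Matrix ι ι α} {Γc : Matrix κ κ α} {R : Matrix κ ι α} (P : Matrix ι κ α)
    (h : Γc * R = R * Γ) : Γc * (R * A * P) = R * (Γ * A) * P := by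
  simp only [← Matrix.mul_assoc, h]

variable [DecidableEq κ] [CommRing α]

theorem coarse_correction_mul_left_of_mul_eq
    {Γ A : Matrix ι ι α} {Γc : Matrix κ κ α} (P : Matrix ι κ α) {R : Matrix κ ι α}
    (hΓc : IsUnit Γc.det) (h : Γc * R = R * Γ) :
    P * (Γc * (R * A * P))⁻¹ * R * (Γ * A) = P * (R * A * P)⁻¹ * R * A := by
  calc P * (Γc * (R * A * P))⁻¹ * R * (Γ * A)
      = P * (R * A * P)⁻¹ * (Γc⁻¹ * (R * Γ)) * A := by
        simp only [mul_inv_rev, Matrix.mul_assoc]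
    _ = P * (R * A * P)⁻¹ * R * A := by
        rw [← h, nonsing_inv_mul_cancel_left _ _ hΓc]

end Matrix

theorem coarse_grid_correction_equal_general
    {n m : ℕ} (D Γ₅ : Matrix (Fin n) (Fin n) ℂ)
    (hH : Γ₅ᴴ = Γ₅)
    (P : Matrix (Fin n) (Fin m) ℂ) (Γ₅c : Matrix (Fin m) (Fin m) ℂ)
    (hHc : Γ₅cᴴ = Γ₅c) (hUc : Γ₅c * Γ₅c = 1)
    (hspin : Γ₅ * P = P * Γ₅c)
    (hDc : IsUnit (Pᴴ * D * P)) :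
    Γ₅c * (Pᴴ * D * P) = Pᴴ * (Γ₅ * D) * P ∧
    IsUnit (Γ₅c * (Pᴴ * D * P)) ∧
    (1 : Matrix (Fin n) (Fin n) ℂ) - P * (Γ₅c * (Pᴴ * D * P))⁻¹ * Pᴴ * (Γ₅ * D)
      = 1 - P * (Pᴴ * D * P)⁻¹ * Pᴴ * D := by
  have hcomm : Γ₅c * Pᴴ = Pᴴ * Γ₅ := conjTranspose_mul_eq_of_mul_eq hH hHc hspin
  have hΓ₅c : IsUnit Γ₅c.det := isUnit_det_of_right_inverse hUc
  refine ⟨mul_galerkin_of_mul_eq P hcomm, ?_, ?_⟩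
  · exact ((isUnit_iff_isUnit_det Γ₅c).mpr hΓ₅c).mul hDc
  · rw [coarse_correction_mul_left_of_mul_eq P hΓ₅c hcomm]

theorem coarse_grid_correction_equal
    {n m : ℕ} (D Γ₅ : Matrix (Fin n) (Fin n) ℂ)
    (hH : Γ₅ᴴ = Γ₅) (hU : Γ₅ * Γ₅ = 1)
    (P : Matrix (Fin n) (Fin m) ℂ) (Γ₅c : Matrix (Fin m) (Fin m) ℂ)
    (hHc : Γ₅cᴴ = Γ₅c) (hUc : Γ₅c * Γ₅c = 1)
    (hspin : Γ₅ * P = P * Γ₅c)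
    (hDc : IsUnit (Pᴴ * D * P)) :
    Γ₅c * (Pᴴ * D * P) = Pᴴ * (Γ₅ * D) * P ∧
    IsUnit (Γ₅c * (Pᴴ * D * P)) ∧
    (1 : Matrix (Fin n) (Fin n) ℂ) - P * (Γ₅c * (Pᴴ * D * P))⁻¹ * Pᴴ * (Γ₅ * D)
      = 1 - P * (Pᴴ * D * P)⁻¹ * Pᴴ * D :=
  coarse_grid_correction_equal_general D Γ₅ hH P Γ₅c hHc hUc hspin hDc
end

section
/- Let $D \in \mathbb{C}^{n\times n}$, $\Gamma_5 \in \mathbb{C}^{n\times n}$ Hermitian with $\Gamma_5^2 = I$, and $Q := \Gamma_5 D$. Let $I_{\mathcal{L}_i} \in \mathbb{C}^{n\times n_i}$ be a matrix whose columns are distinct standard basis vectors of $\mathbb{C}^n$ (an injection of a subdomain), and suppose $\Gamma_5$ is diagonal with entries $\pm 1$. Define $Q_i := I_{\mathcal{L}_i}^H Q I_{\mathcal{L}_i}$ and $D_i := I_{\mathcal{L}_i}^H D I_{\mathcal{L}_i}$, and assume $D_i$ is invertible. Then $Q_i$ is invertible and $I - I_{\mathcal{L}_i} Q_i^{-1}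 I_{\mathcal{L}_i}^H Q = I - I_{\mathcal{L}_i} D_i^{-1} I_{\mathcal{L}_i}^H D$. -/
open Matrix

theorem sap_block_error_propagator_equal
    {n ni : ℕ} (D Γ₅ : Matrix (Fin n) (Fin n) ℂ)
    (d : Fin n → ℂ) (hd : ∀ i, d i = 1 ∨ d i = -1)
    (hdiag : Γ₅ = Matrix.diagonal d)
    (IL : Matrix (Fin n) (Fin ni) ℂ)
    (hIL : ∃ f : Fin ni → Fin n, Function.Injective f ∧
      ∀ i j, IL i j = if i = f j then 1 else 0)
    (hDi : IsUnit (ILᴴ * D * IL)) :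
    IsUnit (ILᴴ * (Γ₅ * D) * IL) ∧
    (1 : Matrix (Fin n) (Fin n) ℂ) - IL * (ILᴴ * (Γ₅ * D) * IL)⁻¹ * ILᴴ * (Γ₅ * D)
      = 1 - IL * (ILᴴ * D * IL)⁻¹ * ILᴴ * D := by
  obtain ⟨f, hf, hILf⟩ := hIL
  set G : Matrix (Fin ni) (Fin ni) ℂ := Matrix.diagonal (d ∘ f) with hG
  -- key commutation: ILᴴ * Γ₅ = G * ILᴴ
  have hcomm : ILᴴ * Γ₅ = G * ILᴴ := by
    ext i j
    simp only [Matrix.mul_apply, hdiag, Matrix.diagonal_apply, Matrix.conjTranspose_apply,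
      hILf, hG, Function.comp]
    rw [Finset.sum_eq_single j, Finset.sum_eq_single i]
    · by_cases h : j = f i <;> simp [h]
    · intro b _ hb
      have : i ≠ b := fun h => hb h.symm
      simp [this]
    · simp
    · intro b _ hb
      simp [hb]
    · simp
  have hG2 : G * G = 1 := by
    ext i j
    simp only [hG, Matrix.diagonal_mul_diagonal, Matrix.diagonal_apply, Function.comp,
      Matrix.one_apply]
    by_cases hij : i = j
    · subst hij; rcases hd (f i) with h | h <;> simp [h]
    · simp [hij]
  have hGunit : IsUnit G := by
    exact ⟨⟨G, G, hG2, hG2⟩, rfl⟩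
  have hGinv : G⁻¹ = G := by
    rw [Matrix.inv_eq_right_inv hG2]
  have hQi : ILᴴ * (Γ₅ * D) * IL = G * (ILᴴ * D * IL) := by
    rw [show ILᴴ * (Γ₅ * D) = ILᴴ * Γ₅ * D by rw [Matrix.mul_assoc], hcomm]
    simp [Matrix.mul_assoc]
  have hQunit : IsUnit (ILᴴ * (Γ₅ * D) * IL) := by
    rw [hQi]; exact hGunit.mul hDi
  refine ⟨hQunit, ?_⟩
  have hinv : (ILᴴ * (Γ₅ * D) * IL)⁻¹ = (ILᴴ * D * IL)⁻¹ * G := by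
    rw [hQi, Matrix.mul_inv_rev, hGinv]
  rw [hinv]
  congr 1
  calc IL * ((ILᴴ * D * IL)⁻¹ * G) * ILᴴ * (Γ₅ * D)
      = IL * (ILᴴ * D * IL)⁻¹ * (G * (ILᴴ * Γ₅)) * D := by
        simp only [Matrix.mul_assoc]
    _ = IL * (ILᴴ * D * IL)⁻¹ * ILᴴ * D := by
        rw [hcomm, ← Matrix.mul_assoc G G, hG2, Matrix.one_mul]
end

section
/- Under the hypotheses of the single-block SAP equivalence (diagonal $\pm 1$ matrix $\Gamma_5$, $Q = \Gamma_5 D$, subdomain injections $I_{\mathcal{L}_1},\dots,I_{\mathcal{L}_b}$ whose columns are standard basis vectors, all block matrices $D_i := I_{\mathcal{L}_i}^H D I_{\mathcal{L}_i}$ invertible), the full SAP error propagators coincide: $\prod_{i=1}^{b}(I - I_{\mathcal{L}_i} Q_i^{-1} I_{\mathcal{L}_i}^H Q) = \prod_{i=1}^{b}(I - I_{\mathcal{L}_i} D_i^{-1} I_{\mathcal{L}_i}^H D)$, where $Q_i := I_{\mathcal{L}_i}^H Q I_{\mathcal{L}_i}$. -/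
open Matrix

theorem sap_error_propagator_equal
    {n b : ℕ} (D Γ₅ : Matrix (Fin n) (Fin n) ℂ)
    (d : Fin n → ℂ) (hd : ∀ i, d i = 1 ∨ d i = -1)
    (hdiag : Γ₅ = Matrix.diagonal d)
    (ni : Fin b → ℕ)
    (IL : (i : Fin b) → Matrix (Fin n) (Fin (ni i)) ℂ)
    (hIL : ∀ i, ∃ f : Fin (ni i) → Fin n, Function.Injective f ∧
      ∀ k j, IL i k j = if k = f j then 1 else 0)
    (hDi : ∀ i, IsUnit ((IL i)ᴴ * D * IL i)) :
    (List.ofFn fun i : Fin b =>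
        (1 : Matrix (Fin n) (Fin n) ℂ) -
          IL i * ((IL i)ᴴ * (Γ₅ * D) * IL i)⁻¹ * (IL i)ᴴ * (Γ₅ * D)).prod
      =
    (List.ofFn fun i : Fin b =>
        (1 : Matrix (Fin n) (Fin n) ℂ) -
          IL i * ((IL i)ᴴ * D * IL i)⁻¹ * (IL i)ᴴ * D).prod := by
  refine congrArg List.prod (congrArg List.ofFn (funext fun i => ?_))
  obtain ⟨f, hf_inj, hf⟩ := hIL i
  set G : Matrix (Fin (ni i)) (Fin (ni i)) ℂ := Matrix.diagonal (fun j => d (f j)) with hG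
  set M : Matrix (Fin (ni i)) (Fin (ni i)) ℂ := (IL i)ᴴ * D * IL i with hM
  have h1 : ∀ j, d (f j) * d (f j) = 1 := fun j => by
    rcases hd (f j) with h | h <;> simp [h]
  have hGG : G * G = 1 := by
    rw [hG, Matrix.diagonal_mul_diagonal]
    simp only [h1, Matrix.diagonal_one]
  have hcomm : (IL i)ᴴ * Γ₅ = G * (IL i)ᴴ := by
    ext j k
    rw [hdiag, Matrix.mul_diagonal, hG, Matrix.diagonal_mul]
    simp only [Matrix.conjTranspose_apply, hf]
    by_cases h : k = f j <;> simp [h]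
  have hK : (IL i)ᴴ * (Γ₅ * D) = G * ((IL i)ᴴ * D) := by
    rw [← Matrix.mul_assoc, hcomm, Matrix.mul_assoc]
  have hQM : (IL i)ᴴ * (Γ₅ * D) * IL i = G * M := by
    rw [hK, hM, Matrix.mul_assoc, Matrix.mul_assoc]
  have hMinv : M * M⁻¹ = 1 :=
    Matrix.mul_nonsing_inv M ((Matrix.isUnit_iff_isUnit_det M).mp (hDi i))
  have hQinv : ((IL i)ᴴ * (Γ₅ * D) * IL i)⁻¹ = M⁻¹ * G := by
    rw [hQM]
    apply Matrix.inv_eq_right_inv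
    calc G * M * (M⁻¹ * G) = G * (M * M⁻¹) * G := by
          simp only [Matrix.mul_assoc]
      _ = G * G := by rw [hMinv, Matrix.mul_one]
      _ = 1 := hGG
  rw [hQinv]
  congr 1
  calc IL i * (M⁻¹ * G) * (IL i)ᴴ * (Γ₅ * D)
      = IL i * (M⁻¹ * (G * ((IL i)ᴴ * (Γ₅ * D)))) := by
        simp only [Matrix.mul_assoc]
    _ = IL i * (M⁻¹ * (G * (G * ((IL i)ᴴ * D)))) := by rw [hK]
    _ = IL i * (M⁻¹ * ((G * G) * ((IL i)ᴴ * D))) := by rw [Matrix.mul_assoc]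
    _ = IL i * (M⁻¹ * ((IL i)ᴴ * D)) := by rw [hGG, Matrix.one_mul]
    _ = IL i * M⁻¹ * (IL i)ᴴ * D := by simp only [Matrix.mul_assoc]
end
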